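/- For σ > 0, γ > 0, the accept–reject algorithm for the Dual Voigt is correct: let μ_X be the N(−γ/σ², 1/σ²) law on ℝ, let A = {c : c > 0} ∪ {c : c ≤ −2γ/σ²} be the acceptance region, and define g(c) = c for c > 0 and g(c) = c + 2γ/σ² for c ≤ −2γ/σ². Then μ_X(A) = 2(1 − Φ(γ/σ)), and the pushforward under g of the conditional law μ_X(· | A) has density equal to the Dual Voigt(γ, σ²) density p'. -/

import Mathlib

/-! N(−γ/σ², 1/σ²) is the image of the standard normal law under x ↦ (x − γ/σ)/σ, so it gives
mass 1 − Φ(γ/σ) to (0, ∞); being symmetric about −γ/σ², it gives the same mass to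
(−∞, −2γ/σ²]. Shifting that left piece by 2γ/σ² moves it onto (−∞, 0], and on both pieces
completing the square turns the Gaussian density into σ φ(σ|u| + γ/σ) = 2(1 − Φ(γ/σ)) p'(u). -/

open MeasureTheory ProbabilityTheory Real

/-- The standard normal cumulative distribution function. -/
noncomputable def stdNormalCDF (t : ℝ) : ℝ :=
  ∫ s in Set.Iic t, (1 / Real.sqrt (2 * π)) * Real.exp (-s ^ 2 / 2)

/-- The Dual Voigt(γ, σ²) density. -/
noncomputable def dualVoigtDensity (σ γ : ℝ) (u : ℝ) : ℝ :=
  1 / (2 * (1 - stdNormalCDF (γ / σ))) * (σ / Real.sqrt (2 * π)) *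
    Real.exp (-γ ^ 2 / (2 * σ ^ 2)) * Real.exp (-γ * |u| - σ ^ 2 * u ^ 2 / 2)

open Set
open scoped ENNReal NNReal

lemma map_add_const_withDensity (f : ℝ → ℝ≥0∞) (a : ℝ) :
    (volume.withDensity f).map (· + a) = volume.withDensity (fun u ↦ f (u - a)) := by
  ext s hs
  rw [Measure.map_apply (measurable_add_const a) hs, withDensity_apply _ hs,
    withDensity_apply _ (measurable_add_const a hs),
    ← (measurePreserving_add_right volume a).setLIntegral_comp_preimage_emb
      (measurableEmbedding_addRight a) (fun u ↦ f (u - a))]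
  simp only [add_sub_cancel_right]

lemma restrict_withDensity_congr {α : Type*} [MeasurableSpace α] {μ : Measure α}
    {f g : α → ℝ≥0∞} {s : Set α} (hs : MeasurableSet s) (h : EqOn f g s) :
    (μ.withDensity f).restrict s = (μ.withDensity g).restrict s := by
  rw [restrict_withDensity hs, restrict_withDensity hs]
  exact withDensity_congr_ae (ae_restrict_of_forall_mem hs h)

theorem map_ite_add_restrict_withDensity (f : ℝ → ℝ≥0∞) {a : ℝ} (ha : 0 ≤ a) :
    ((volume.withDensity f).restrict (Ioi 0 ∪ Iic (-a))).map
        (fun c ↦ if 0 < c then c else c + a) =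
      volume.withDensity (fun u ↦ if 0 < u then f u else f (u - a)) := by
  set g : ℝ → ℝ := fun c ↦ if 0 < c then c else c + a
  have hg : Measurable g := Measurable.ite measurableSet_Ioi measurable_id (measurable_add_const a)
  have hdisj : Disjoint (Ioi (0 : ℝ)) (Iic (-a)) :=
    Set.disjoint_left.2 fun x (hx : 0 < x) (hx' : x ≤ -a) ↦ by linarith
  have h_pos : ((volume.withDensity f).restrict (Ioi 0)).map g =
      (volume.withDensity f).restrict (Ioi 0) := by
    rw [Measure.map_congr (f := g) (g := id) (ae_restrict_of_forall_mem measurableSet_Ioi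
      fun x (hx : 0 < x) ↦ if_pos hx), Measure.map_id]
  have h_neg : ((volume.withDensity f).restrict (Iic (-a))).map g =
        (volume.withDensity (fun u ↦ f (u - a))).restrict (Iic 0) := by
    rw [Measure.map_congr (f := g) (g := (· + a)) (ae_restrict_of_forall_mem measurableSet_Iic
      fun x (hx : x ≤ -a) ↦ if_neg (by linarith)), ← map_add_const_withDensity,
      Measure.restrict_map (measurable_add_const a) measurableSet_Iic, preimage_add_const_Iic,
      zero_sub]
  have h_split : volume.withDensity (fun u ↦ if 0 < u then f u else f (u - a)) =
      (volume.withDensity f).restrict (Ioi 0) +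
        (volume.withDensity (fun u ↦ f (u - a))).restrict (Iic 0) := by
    rw [← Measure.restrict_add_restrict_compl (μ := volume.withDensity _)
      (measurableSet_Ioi (a := 0)), compl_Ioi,
      restrict_withDensity_congr measurableSet_Ioi (g := f) fun x (hx : 0 < x) ↦ if_pos hx,
      restrict_withDensity_congr measurableSet_Iic (g := fun u ↦ f (u - a))
        fun x (hx : x ≤ 0) ↦ if_neg (not_lt.2 hx)]
  rw [Measure.restrict_union hdisj measurableSet_Iic, Measure.map_add _ _ hg, h_pos, h_neg,
    h_split]

lemma gaussianReal_zero_one_Iic (t : ℝ) :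
    gaussianReal 0 1 (Iic t) = ENNReal.ofReal (stdNormalCDF t) := by
  rw [gaussianReal_apply_eq_integral _ one_ne_zero, stdNormalCDF]
  congr 2 with s
  simp [gaussianPDFReal]

lemma gaussianReal_zero_one_Ioi (t : ℝ) :
    gaussianReal 0 1 (Ioi t) = ENNReal.ofReal (1 - stdNormalCDF t) := by
  have hΦ : 0 ≤ stdNormalCDF t := integral_nonneg fun _ ↦ by positivity
  rw [← compl_Iic, prob_compl_eq_one_sub measurableSet_Iic, gaussianReal_zero_one_Iic,
    ENNReal.ofReal_sub _ hΦ, ENNReal.ofReal_one]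

lemma one_sub_stdNormalCDF_pos (t : ℝ) : 0 < 1 - stdNormalCDF t := by
  rw [← ENNReal.ofReal_pos, ← gaussianReal_zero_one_Ioi, pos_iff_ne_zero]
  exact fun h ↦ by simpa using gaussianReal_absolutelyContinuous' 0 one_ne_zero h

lemma gaussianReal_map_two_mul_sub (m : ℝ) (v : ℝ≥0) :
    (gaussianReal m v).map (2 * m - ·) = gaussianReal m v := by
  rw [gaussianReal_map_const_sub]
  ring_nf

lemma gaussianReal_Iic_two_mul_sub (m : ℝ) {v : ℝ≥0} (hv : v ≠ 0) (t : ℝ) :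
    gaussianReal m v (Iic (2 * m - t)) = gaussianReal m v (Ioi t) := by
  have := nullSingletonClass_gaussianReal (μ := m) hv
  conv_lhs => rw [← gaussianReal_map_two_mul_sub]
  rw [Measure.map_apply (by fun_prop) measurableSet_Iic, measure_congr Ioi_ae_eq_Ici]
  congr 1 with x
  simp

section DualVoigt

variable {σ γ : ℝ}

lemma gaussianReal_neg_div_sq_eq_map (hσ : σ ≠ 0) :
    gaussianReal (-γ / σ ^ 2) (Real.toNNReal (1 / σ ^ 2)) =
      (gaussianReal 0 1).map (fun x ↦ (x - γ / σ) / σ) := by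
  rw [show (fun x ↦ (x - γ / σ) / σ) = (· / σ) ∘ (· - γ / σ) from rfl,
    ← Measure.map_map (by fun_prop) (by fun_prop), gaussianReal_map_sub_const,
    gaussianReal_map_div_const]
  congr 1
  · field_simp
    ring
  · ext
    simp [sq_nonneg]

lemma gaussianReal_neg_div_sq_Ioi_zero (hσ : 0 < σ) :
    gaussianReal (-γ / σ ^ 2) (Real.toNNReal (1 / σ ^ 2)) (Ioi 0) =
      ENNReal.ofReal (1 - stdNormalCDF (γ / σ)) := by
  rw [gaussianReal_neg_div_sq_eq_map hσ.ne', Measure.map_apply (by fun_prop) measurableSet_Ioi,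
    ← gaussianReal_zero_one_Ioi]
  congr 1 with x
  simp [div_pos_iff_of_pos_right hσ]

theorem gaussianReal_neg_div_sq_Ioi_union_Iic (hσ : 0 < σ) (hγ : 0 ≤ γ) :
    gaussianReal (-γ / σ ^ 2) (Real.toNNReal (1 / σ ^ 2)) (Ioi 0 ∪ Iic (-(2 * γ / σ ^ 2))) =
      ENNReal.ofReal (2 * (1 - stdNormalCDF (γ / σ))) := by
  have hv : Real.toNNReal (1 / σ ^ 2) ≠ 0 := (Real.toNNReal_pos.2 (by positivity)).ne'
  have hdisj : Disjoint (Ioi (0 : ℝ)) (Iic (-(2 * γ / σ ^ 2))) :=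
    Set.disjoint_left.2 fun x (hx : 0 < x) (hx' : x ≤ _) ↦ by
      have : 0 ≤ 2 * γ / σ ^ 2 := by positivity
      linarith
  have hreflect : -(2 * γ / σ ^ 2) = 2 * (-γ / σ ^ 2) - 0 := by ring
  rw [measure_union hdisj measurableSet_Iic, hreflect, gaussianReal_Iic_two_mul_sub _ hv,
    gaussianReal_neg_div_sq_Ioi_zero hσ, ← ENNReal.ofReal_add (one_sub_stdNormalCDF_pos _).le
    (one_sub_stdNormalCDF_pos _).le, two_mul]

lemma gaussianPDFReal_neg_div_sq (hσ : 0 < σ) (x : ℝ) :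
    gaussianPDFReal (-γ / σ ^ 2) (Real.toNNReal (1 / σ ^ 2)) x =
      σ / √(2 * π) * exp (-(σ * x + γ / σ) ^ 2 / 2) := by
  rw [gaussianPDFReal, Real.coe_toNNReal _ (by positivity), mul_one_div, sqrt_div' _ (sq_nonneg σ),
    sqrt_sq hσ.le, inv_div]
  congr 2
  field_simp
  ring

lemma two_mul_one_sub_stdNormalCDF_mul_dualVoigtDensity (hσ : σ ≠ 0) (u : ℝ) :
    2 * (1 - stdNormalCDF (γ / σ)) * dualVoigtDensity σ γ u =
      σ / √(2 * π) * exp (-(σ * |u| + γ / σ) ^ 2 / 2) := by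
  have hΦ := (one_sub_stdNormalCDF_pos (γ / σ)).ne'
  have hexp : -(σ * |u| + γ / σ) ^ 2 / 2 =
      -γ ^ 2 / (2 * σ ^ 2) + (-γ * |u| - σ ^ 2 * u ^ 2 / 2) := by
    field_simp
    rw [← sq_abs u]
    ring
  rw [hexp, exp_add, dualVoigtDensity]
  field_simp

lemma ite_gaussianPDF_neg_div_sq_eq_smul (hσ : 0 < σ) :
    (fun u ↦ if 0 < u then gaussianPDF (-γ / σ ^ 2) (Real.toNNReal (1 / σ ^ 2)) u
      else gaussianPDF (-γ / σ ^ 2) (Real.toNNReal (1 / σ ^ 2)) (u - 2 * γ / σ ^ 2)) =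
      ENNReal.ofReal (2 * (1 - stdNormalCDF (γ / σ))) • fun u ↦
        ENNReal.ofReal (dualVoigtDensity σ γ u) := by
  ext u
  rw [Pi.smul_apply, smul_eq_mul,
    ← ENNReal.ofReal_mul (by linarith [one_sub_stdNormalCDF_pos (γ / σ)]),
    two_mul_one_sub_stdNormalCDF_mul_dualVoigtDensity hσ.ne']
  split_ifs with hu
  · rw [gaussianPDF, gaussianPDFReal_neg_div_sq hσ, abs_of_pos hu]
  · rw [gaussianPDF, gaussianPDFReal_neg_div_sq hσ, abs_of_nonpos (not_lt.1 hu)]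
    congr 4
    field_simp
    ring

end DualVoigt

/-- correctness of the accept–reject algorithm for the Dual Voigt. With
μ_X the N(−γ/σ², 1/σ²) law, acceptance region A = {c > 0} ∪ {c ≤ −2γ/σ²}, and
g(c) = c on {c > 0}, g(c) = c + 2γ/σ² otherwise, we have μ_X(A) = 2(1 − Φ(γ/σ)), and the
pushforward of the conditional law μ_X(·|A) under g has the Dual Voigt density. -/
theorem dualVoigt_accept_reject (σ γ : ℝ) (hσ : 0 < σ) (hγ : 0 < γ) :
    (gaussianReal (-γ / σ ^ 2) (Real.toNNReal (1 / σ ^ 2)))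
        ({c : ℝ | 0 < c} ∪ {c : ℝ | c ≤ -2 * γ / σ ^ 2}) =
      ENNReal.ofReal (2 * (1 - stdNormalCDF (γ / σ))) ∧
    (ProbabilityTheory.cond (gaussianReal (-γ / σ ^ 2) (Real.toNNReal (1 / σ ^ 2)))
        ({c : ℝ | 0 < c} ∪ {c : ℝ | c ≤ -2 * γ / σ ^ 2})).map
        (fun c : ℝ => if 0 < c then c else c + 2 * γ / σ ^ 2) =
      volume.withDensity (fun u : ℝ => ENNReal.ofReal (dualVoigtDensity σ γ u)) := by
  have hA : {c : ℝ | 0 < c} ∪ {c : ℝ | c ≤ -2 * γ / σ ^ 2} = Ioi 0 ∪ Iic (-(2 * γ / σ ^ 2)) := by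
    rw [neg_mul, neg_div]
    rfl
  have hv : Real.toNNReal (1 / σ ^ 2) ≠ 0 := (Real.toNNReal_pos.2 (by positivity)).ne'
  have hZ : ENNReal.ofReal (2 * (1 - stdNormalCDF (γ / σ))) ≠ 0 :=
    (ENNReal.ofReal_pos.2 (by linarith [one_sub_stdNormalCDF_pos (γ / σ)])).ne'
  rw [hA]
  refine ⟨gaussianReal_neg_div_sq_Ioi_union_Iic hσ hγ.le, ?_⟩
  rw [ProbabilityTheory.cond, Measure.map_smul, gaussianReal_neg_div_sq_Ioi_union_Iic hσ hγ.le,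
    gaussianReal_of_var_ne_zero _ hv, map_ite_add_restrict_withDensity _ (by positivity),
    ite_gaussianPDF_neg_div_sq_eq_smul hσ, withDensity_smul' _ _ ENNReal.ofReal_ne_top, smul_smul,
    ENNReal.inv_mul_cancel hZ ENNReal.ofReal_ne_top, one_smul]
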